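/- arXiv:1005.5197 — 4 statements merged into one kernel-verified Lean document; each statement's English description precedes it below -/
import Mathlib

section
/- Let P be a user distribution on relevance vectors over a finite document set X with metric D, and suppose P is conditionally L-continuous with respect to (X, D). Then P is conditionally L-correlated with respect to (X, 2D); that is, for all documents x, y ∈ X and every subset S ⊆ X, the conditional probability P(π(x) ≠ π(y) | Z_S) ≤ 2·D(x, y). -/
open scoped Classical
open Finset

/-- Probability of an event under a distribution `P` on relevance vectors. -/
noncomputable def pr {X : Type*} [Fintype X] [DecidableEq X]
    (P : (X → Bool) → ℝ) (E : Set (X → Bool)) : ℝ :=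
  ∑ π : X → Bool, if π ∈ E then P π else 0

/-- Conditional probability `P(E | F)`. -/
noncomputable def condPr {X : Type*} [Fintype X] [DecidableEq X]
    (P : (X → Bool) → ℝ) (E F : Set (X → Bool)) : ℝ :=
  pr P (E ∩ F) / pr P F

/-- The event `Z_S` that all documents in `S` are irrelevant. -/
def ZS {X : Type*} (S : Finset X) : Set (X → Bool) :=
  {π | ∀ s ∈ S, π s = false}

/-- Conditional pointwise mean `μ(x | Z_S)`. -/
noncomputable def condMean {X : Type*} [Fintype X] [DecidableEq X]
    (P : (X → Bool) → ℝ) (x : X) (S : Finset X) : ℝ :=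
  condPr P {π | π x = true} (ZS S)

lemma pr_nonneg' {X : Type*} [Fintype X] [DecidableEq X]
    (P : (X → Bool) → ℝ) (hP0 : ∀ π, 0 ≤ P π) (E : Set (X → Bool)) :
    0 ≤ pr P E := by
  apply Finset.sum_nonneg
  intro π _
  split <;> simp [hP0 π]

lemma pr_mono' {X : Type*} [Fintype X] [DecidableEq X]
    (P : (X → Bool) → ℝ) (hP0 : ∀ π, 0 ≤ P π) {E F : Set (X → Bool)}
    (h : E ⊆ F) : pr P E ≤ pr P F := by
  apply Finset.sum_le_sum
  intro π _
  by_cases hE : π ∈ E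
  · simp [hE, h hE]
  · simp [hE]
    split <;> simp [hP0 π]

/-- conditional L-continuity w.r.t. `(X, D)` implies conditional
L-correlation w.r.t. `(X, 2D)`. -/
theorem conditionally_L_continuous_implies_L_correlated_2D
    {X : Type*} [Fintype X] [DecidableEq X] [MetricSpace X]
    (P : (X → Bool) → ℝ)
    (hP0 : ∀ π, 0 ≤ P π) (hP1 : ∑ π : X → Bool, P π = 1)
    (hZ : ∀ S : Finset X, 0 < pr P (ZS S))
    (hLip : ∀ (x y : X) (S : Finset X),
      |condMean P x S - condMean P y S| ≤ dist x y)
    (x y : X) (S : Finset X) :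
    condPr P {π | π x ≠ π y} (ZS S) ≤ 2 * dist x y := by
  set d := dist x y with hd
  have hd0 : 0 ≤ d := dist_nonneg
  set Sy := insert y S with hSy
  set Sx := insert x S with hSx
  -- μ(y | Z_{S∪{y}}) = 0
  have hmean0 : ∀ z : X, ∀ T : Finset X, z ∈ T → condMean P z T = 0 := by
    intro z T hzT
    have hempty : ({π : X → Bool | π z = true} ∩ ZS T) = ∅ := by
      ext π
      simp only [Set.mem_inter_iff, Set.mem_setOf_eq, ZS, Set.mem_empty_iff_false, iff_false]
      rintro ⟨h1, h2⟩
      have := h2 z hzT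
      rw [this] at h1
      exact Bool.false_ne_true h1
    unfold condMean condPr
    rw [hempty]
    have : pr P (∅ : Set (X → Bool)) = 0 := by
      unfold pr; simp
    rw [this, zero_div]
  -- μ(x | Z_{S∪{y}}) ≤ d and μ(y | Z_{S∪{x}}) ≤ d
  have hx : condMean P x Sy ≤ d := by
    have := hLip x y Sy
    rw [hmean0 y Sy (Finset.mem_insert_self y S), sub_zero] at this
    exact le_trans (le_abs_self _) this
  have hy : condMean P y Sx ≤ d := by
    have := hLip y x Sx
    rw [hmean0 x Sx (Finset.mem_insert_self x S), sub_zero] at this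
    calc condMean P y Sx ≤ |condMean P y Sx| := le_abs_self _
      _ ≤ dist y x := this
      _ = d := dist_comm y x
  -- split the event
  have hsplit : pr P ({π : X → Bool | π x ≠ π y} ∩ ZS S)
      = pr P ({π : X → Bool | π x = true} ∩ ZS Sy)
      + pr P ({π : X → Bool | π y = true} ∩ ZS Sx) := by
    unfold pr
    rw [← Finset.sum_add_distrib]
    apply Finset.sum_congr rfl
    intro π _
    by_cases hZS : π ∈ ZS S
    · have hmemSy : π ∈ ZS Sy ↔ π y = false := by
        simp only [ZS, Set.mem_setOf_eq, hSy, Finset.mem_insert]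
        constructor
        · intro h; exact h y (Or.inl rfl)
        · intro h s hs
          rcases hs with rfl | hs
          · exact h
          · exact hZS s hs
      have hmemSx : π ∈ ZS Sx ↔ π x = false := by
        simp only [ZS, Set.mem_setOf_eq, hSx, Finset.mem_insert]
        constructor
        · intro h; exact h x (Or.inl rfl)
        · intro h s hs
          rcases hs with rfl | hs
          · exact h
          · exact hZS s hs
      cases hpx : π x <;> cases hpy : π y <;>
        simp [Set.mem_inter_iff, Set.mem_setOf_eq, hZS, hmemSy, hmemSx, hpx, hpy]
    · have h1 : π ∉ ZS Sy := fun h => hZS (fun s hs => h s (Finset.mem_insert_of_mem hs))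
      have h2 : π ∉ ZS Sx := fun h => hZS (fun s hs => h s (Finset.mem_insert_of_mem hs))
      simp [Set.mem_inter_iff, hZS, h1, h2]
  -- bound each piece
  have hb1 : pr P ({π : X → Bool | π x = true} ∩ ZS Sy) ≤ d * pr P (ZS S) := by
    have heq : pr P ({π : X → Bool | π x = true} ∩ ZS Sy)
        = condMean P x Sy * pr P (ZS Sy) := by
      unfold condMean condPr
      rw [div_mul_cancel₀ _ (ne_of_gt (hZ Sy))]
    rw [heq]
    calc condMean P x Sy * pr P (ZS Sy) ≤ d * pr P (ZS Sy) :=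
          mul_le_mul_of_nonneg_right hx (le_of_lt (hZ Sy))
      _ ≤ d * pr P (ZS S) := by
          apply mul_le_mul_of_nonneg_left _ hd0
          apply pr_mono' P hP0
          intro π h s hs
          exact h s (Finset.mem_insert_of_mem hs)
  have hb2 : pr P ({π : X → Bool | π y = true} ∩ ZS Sx) ≤ d * pr P (ZS S) := by
    have heq : pr P ({π : X → Bool | π y = true} ∩ ZS Sx)
        = condMean P y Sx * pr P (ZS Sx) := by
      unfold condMean condPr
      rw [div_mul_cancel₀ _ (ne_of_gt (hZ Sx))]
    rw [heq]
    calc condMean P y Sx * pr P (ZS Sx) ≤ d * pr P (ZS Sx) :=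
          mul_le_mul_of_nonneg_right hy (le_of_lt (hZ Sx))
      _ ≤ d * pr P (ZS S) := by
          apply mul_le_mul_of_nonneg_left _ hd0
          apply pr_mono' P hP0
          intro π h s hs
          exact h s (Finset.mem_insert_of_mem hs)
  unfold condPr
  rw [div_le_iff₀ (hZ S), hsplit]
  calc pr P ({π : X → Bool | π x = true} ∩ ZS Sy)
      + pr P ({π : X → Bool | π y = true} ∩ ZS Sx)
      ≤ d * pr P (ZS S) + d * pr P (ZS S) := add_le_add hb1 hb2
    _ = 2 * d * pr P (ZS S) := by ring
end

section
/- Let (P_i)_{i ∈ ℕ} be countably many user distributions on relevance vectors over a finite document set X with metric D, each conditionally L-continuous with respect to (X, D), and let (q_i)_{i ∈ ℕ} be nonnegative reals summing to 1. Then the mixture P := Σ_i q_i·P_i is conditionally L-continuous with respect to (X, D); that is, |μ(x|Z_S) − μ(y|Z_S)| ≤ D(x, y) for all x, y ∈ X and all S ⊆ X, where μ(·|Z_S) is the conditional pointwise mean of P. -/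
open scoped Classical
open Finset

/-- a countable mixture of conditionally L-continuous user
distributions is conditionally L-continuous. -/
theorem mixture_conditionally_L_continuous
    {X : Type*} [Fintype X] [DecidableEq X] [MetricSpace X]
    (Pi : ℕ → (X → Bool) → ℝ) (q : ℕ → ℝ)
    (hPi0 : ∀ i π, 0 ≤ Pi i π) (hPi1 : ∀ i, ∑ π : X → Bool, Pi i π = 1)
    (hq0 : ∀ i, 0 ≤ q i) (hq1 : ∑' i, q i = 1)
    (hZi : ∀ (i : ℕ) (S : Finset X), 0 < pr (Pi i) (ZS S))
    (hLipi : ∀ (i : ℕ) (x y : X) (S : Finset X),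
      |condMean (Pi i) x S - condMean (Pi i) y S| ≤ dist x y)
    (P : (X → Bool) → ℝ) (hP : ∀ π, P π = ∑' i, q i * Pi i π)
    (hZ : ∀ S : Finset X, 0 < pr P (ZS S))
    (x y : X) (S : Finset X) :
    |condMean P x S - condMean P y S| ≤ dist x y := by
  classical
  have hqs : Summable q := by
    by_contra h
    rw [tsum_eq_zero_of_not_summable h] at hq1
    norm_num at hq1
  have hPle1 : ∀ i (π : X → Bool), Pi i π ≤ 1 := by
    intro i π
    calc Pi i π ≤ ∑ π' : X → Bool, Pi i π' :=
          Finset.single_le_sum (fun π' _ => hPi0 i π') (Finset.mem_univ π)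
      _ = 1 := hPi1 i
  have hpr0 : ∀ i (E : Set (X → Bool)), 0 ≤ pr (Pi i) E := fun i E =>
    Finset.sum_nonneg fun π _ => by
      split
      · exact hPi0 i π
      · exact le_rfl
  have hpr1 : ∀ i (E : Set (X → Bool)), pr (Pi i) E ≤ 1 := by
    intro i E
    calc pr (Pi i) E ≤ ∑ π : X → Bool, Pi i π :=
          Finset.sum_le_sum fun π _ => by
            split
            · exact le_rfl
            · exact hPi0 i π
      _ = 1 := hPi1 i
  have hsumE : ∀ E : Set (X → Bool), Summable (fun i => q i * pr (Pi i) E) := by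
    intro E
    refine Summable.of_nonneg_of_le (fun i => mul_nonneg (hq0 i) (hpr0 i E))
      (fun i => ?_) hqs
    nlinarith [hpr1 i E, hq0 i, hpr0 i E]
  have key : ∀ E : Set (X → Bool), pr P E = ∑' i, q i * pr (Pi i) E := by
    intro E
    have hsummand : ∀ π : X → Bool,
        Summable (fun i => if π ∈ E then q i * Pi i π else 0) := by
      intro π
      by_cases hπ : π ∈ E
      · simp only [if_pos hπ]
        refine Summable.of_nonneg_of_le (fun i => mul_nonneg (hq0 i) (hPi0 i π))
          (fun i => ?_) hqs
        nlinarith [hPle1 i π, hq0 i, hPi0 i π]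
      · simpa [hπ] using summable_zero
    have h1 : ∀ π : X → Bool,
        (if π ∈ E then P π else 0) = ∑' i, if π ∈ E then q i * Pi i π else 0 := by
      intro π
      by_cases hπ : π ∈ E
      · simp [hπ, hP π]
      · simp [hπ]
    unfold pr
    rw [Finset.sum_congr rfl (fun π _ => h1 π),
      ← Summable.tsum_finsetSum (fun π _ => hsummand π)]
    refine tsum_congr fun i => ?_
    rw [Finset.mul_sum]
    refine Finset.sum_congr rfl fun π _ => ?_
    split <;> simp
  set Ax : Set (X → Bool) := {π | π x = true} ∩ ZS S with hAx
  set Ay : Set (X → Bool) := {π | π y = true} ∩ ZS S with hAy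
  have hi : ∀ i, |pr (Pi i) Ax - pr (Pi i) Ay| ≤ dist x y * pr (Pi i) (ZS S) := by
    intro i
    have h := hLipi i x y S
    unfold condMean condPr at h
    rw [div_sub_div_same, abs_div, abs_of_pos (hZi i S)] at h
    exact (div_le_iff₀ (hZi i S)).mp h
  have habs : ∀ i, |q i * pr (Pi i) Ax - q i * pr (Pi i) Ay|
      ≤ dist x y * (q i * pr (Pi i) (ZS S)) := by
    intro i
    rw [← mul_sub, abs_mul, abs_of_nonneg (hq0 i)]
    calc q i * |pr (Pi i) Ax - pr (Pi i) Ay|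
        ≤ q i * (dist x y * pr (Pi i) (ZS S)) :=
          mul_le_mul_of_nonneg_left (hi i) (hq0 i)
      _ = dist x y * (q i * pr (Pi i) (ZS S)) := by ring
  have hsub : Summable (fun i => q i * pr (Pi i) Ax - q i * pr (Pi i) Ay) :=
    (hsumE Ax).sub (hsumE Ay)
  have hnum : |pr P Ax - pr P Ay| ≤ dist x y * pr P (ZS S) := by
    rw [key Ax, key Ay, key (ZS S), ← Summable.tsum_sub (hsumE Ax) (hsumE Ay),
      ← tsum_mul_left]
    have hstep1 : |∑' i, (q i * pr (Pi i) Ax - q i * pr (Pi i) Ay)|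
        ≤ ∑' i, |q i * pr (Pi i) Ax - q i * pr (Pi i) Ay| := by
      have := norm_tsum_le_tsum_norm (f := fun i => q i * pr (Pi i) Ax - q i * pr (Pi i) Ay)
        (by simpa [Real.norm_eq_abs] using hsub.abs)
      simpa [Real.norm_eq_abs] using this
    have hstep2 : ∑' i, |q i * pr (Pi i) Ax - q i * pr (Pi i) Ay|
        ≤ ∑' i, dist x y * (q i * pr (Pi i) (ZS S)) :=
      Summable.tsum_le_tsum habs hsub.abs ((hsumE (ZS S)).mul_left _)
    exact hstep1.trans hstep2
  unfold condMean condPr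
  rw [div_sub_div_same, abs_div, abs_of_pos (hZ S)]
  exact (div_le_iff₀ (hZ S)).mpr hnum
end

section
/- Let (Ω, P) be a probability space, let Z, A, B be events with 0 < P(A) < 1 and 0 < P(B) < 1, and suppose Z is conditionally independent of B given A and given Aᶜ, in the sense that P(Z ∩ A | B') = P(A | B')·P(Z | A) and P(Z ∩ Aᶜ | B') = P(Aᶜ | B')·P(Z | Aᶜ) for B' ∈ {B, Bᶜ}. If P(Z | A) ≥ P(Z | Aᶜ) and P(A | B) ≥ P(A | Bᶜ), then P(Z | B) ≥ P(Z | Bᶜ). (This is the abstract content of the induction step: if the event Z_S is more likely when a node u takes value 0 than value 1, and the value at u is more likely to be 0 when its parent takes value 0, then Z_S is more likely when the parent takes value 0.) -/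
open MeasureTheory ProbabilityTheory

/-- if `Z` is conditionally independent of `B` given `A` and
given `Aᶜ`, `P(Z | A) ≥ P(Z | Aᶜ)`, and `P(A | B) ≥ P(A | Bᶜ)`, then
`P(Z | B) ≥ P(Z | Bᶜ)`. -/
theorem cond_monotone_through_intermediate
    {Ω : Type*} [MeasurableSpace Ω] (μ : Measure Ω) [IsProbabilityMeasure μ]
    (Z A B : Set Ω)
    (hZ : MeasurableSet Z) (hA : MeasurableSet A) (hB : MeasurableSet B)
    (hA0 : 0 < μ A) (hA1 : μ A < 1) (hB0 : 0 < μ B) (hB1 : μ B < 1)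
    (hCI : ∀ B' ∈ ({B, Bᶜ} : Set (Set Ω)),
      μ[|B'] (Z ∩ A) = μ[|B'] A * μ[|A] Z ∧
      μ[|B'] (Z ∩ Aᶜ) = μ[|B'] Aᶜ * μ[|Aᶜ] Z)
    (h1 : μ[|Aᶜ] Z ≤ μ[|A] Z) (h2 : μ[|Bᶜ] A ≤ μ[|B] A) :
    μ[|Bᶜ] Z ≤ μ[|B] Z := by
  have hBc0 : μ Bᶜ ≠ 0 := by
    rw [prob_compl_eq_one_sub hB]
    simpa [tsub_eq_zero_iff_le] using hB1.not_ge
  have instB : IsProbabilityMeasure (μ[|B]) := cond_isProbabilityMeasure hB0.ne'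
  have instBc : IsProbabilityMeasure (μ[|Bᶜ]) := cond_isProbabilityMeasure hBc0
  set a := μ[|A] Z with ha
  set b := μ[|Aᶜ] Z with hb
  set p := μ[|B] A with hp
  set q := μ[|Bᶜ] A with hq
  have decomp : ∀ (ν : Measure Ω) [IsProbabilityMeasure ν],
      ν Z = ν (Z ∩ A) + ν (Z ∩ Aᶜ) := by
    intro ν _
    rw [← measure_inter_add_diff Z hA, Set.diff_eq]
  obtain ⟨e1, e2⟩ := hCI B (by simp)
  obtain ⟨e3, e4⟩ := hCI Bᶜ (by simp)
  have hZB : μ[|B] Z = p * a + (1 - p) * b := by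
    rw [decomp (μ[|B]), e1, e2, prob_compl_eq_one_sub hA]
  have hZBc : μ[|Bᶜ] Z = q * a + (1 - q) * b := by
    rw [decomp (μ[|Bᶜ]), e3, e4, prob_compl_eq_one_sub hA]
  rw [hZB, hZBc]
  have hp1 : p ≤ 1 := prob_le_one
  have key : 1 - q = (1 - p) + (p - q) := (tsub_add_tsub_cancel hp1 h2).symm
  calc q * a + (1 - q) * b
      = q * a + (p - q) * b + (1 - p) * b := by rw [key]; ring
    _ ≤ q * a + (p - q) * a + (1 - p) * b := by
        gcongr
    _ = p * a + (1 - p) * b := by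
        rw [← add_mul, add_tsub_cancel_of_le h2]
end

section
/- Let (X, D) be a metric space, let α > 0, and let ν : X → ℝ satisfy ν(z) ≥ α for all z ∈ X and |ν(u) − ν(v)| ≤ D(u, v) for all u, v ∈ X. Let x, y, w ∈ X be points with D(x, w) + D(w, y) = D(x, y). Then min(1, D(x, y)/ν(w)) ≤ D(x, y) · min(1/α, 3/(ν(x) + ν(y))). -/
/-- for a 1-Lipschitz `ν ≥ α > 0` and `w` on a geodesic between
`x` and `y`, `min(1, D(x, y)/ν(w)) ≤ D(x, y) · min(1/α, 3/(ν(x) + ν(y)))`. -/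
theorem failure_prob_le_Dmu
    {X : Type*} [MetricSpace X] (α : ℝ) (hα : 0 < α) (ν : X → ℝ)
    (hν : ∀ z : X, α ≤ ν z)
    (hLip : ∀ u v : X, |ν u - ν v| ≤ dist u v)
    (x y w : X) (hgeo : dist x w + dist w y = dist x y) :
    min 1 (dist x y / ν w) ≤ dist x y * min (1 / α) (3 / (ν x + ν y)) := by
  set d := dist x y with hd
  have hc : 0 < ν w := lt_of_lt_of_le hα (hν w)
  have hab : 0 < ν x + ν y := by
    have := hν x; have := hν y; linarith
  have hd0 : 0 ≤ d := dist_nonneg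
  have h1 : ν x - ν w ≤ dist x w := (abs_le.mp (hLip x w)).2
  have h2 : ν y - ν w ≤ dist w y := by
    have := (abs_le.mp (hLip w y)).1; linarith
  have hsum : ν x + ν y ≤ 2 * ν w + d := by
    have := hgeo; linarith
  rw [mul_min_of_nonneg _ _ hd0]
  refine le_min ?_ ?_
  · calc min 1 (d / ν w) ≤ d / ν w := min_le_right _ _
      _ ≤ d / α := by
        apply div_le_div_of_nonneg_left hd0 hα (hν w)
      _ = d * (1 / α) := by ring
  · have hr : d * (3 / (ν x + ν y)) = 3 * d / (ν x + ν y) := by ring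
    rcases le_or_gt (ν w) d with h | h
    · calc min 1 (d / ν w) ≤ 1 := min_le_left _ _
        _ ≤ d * (3 / (ν x + ν y)) := by
          rw [hr, le_div_iff₀ hab]; nlinarith
    · calc min 1 (d / ν w) ≤ d / ν w := min_le_right _ _
        _ ≤ d * (3 / (ν x + ν y)) := by
          rw [hr, div_le_div_iff₀ hc hab]; nlinarith
end
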